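/- In the 3-uel with distinct marksmanships p1, p2, p3 ∈ (0,1), player P1's payoff V_{1,1111} as a function of his mixed strategy (x12, x13) with x12, x13 ≥ 0 and x12 + x13 = 1 is maximized at x12 = 1 if p2 > p3 and at x13 = 1 if p3 > p2; i.e., the unique best response at state 1111 is to shoot the strongest opponent. -/

import Mathlib

/-!
Hitting P2 leaves P1 in a duel against P3 in which P3 fires first, and vice versa, so P1's
payoff is an affine function of his mixed strategy whose two slopes are the values of these
duels. The value of such a duel strictly decreases with the opponent's marksmanship, hence the
payoff is maximized, uniquely, by putting all weight on the stronger opponent.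
-/

/-- The probability that a marksman `p` wins a duel against a marksman `q` who fires first. -/
noncomputable def duelValueSecond (p q : ℝ) : ℝ := p * (1 - q) / (p + q - p * q)

lemma duelValueSecond_lt_duelValueSecond {p q r : ℝ} (hp : 0 < p) (hp1 : p ≤ 1) (hq : 0 ≤ q)
    (hqr : q < r) : duelValueSecond p r < duelValueSecond p q := by
  have hdq : 0 < p + q - p * q := by nlinarith
  have hdr : 0 < p + r - p * r := by nlinarith
  unfold duelValueSecond
  rw [div_lt_div_iff₀ hdr hdq]
  -- the cross-multiplied difference is exactly `p * (r - q)`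
  nlinarith [mul_pos hp (sub_pos.mpr hqr)]

lemma convex_comb_lt_left {a b x y : ℝ} (hba : b < a) (hy : 0 < y) (hxy : x + y = 1) :
    x * a + y * b < a := by
  have : x * a + y * b = a - y * (a - b) := by linear_combination a * hxy
  linarith [mul_pos hy (sub_pos.mpr hba)]

theorem truel_shoot_strongest_opponent_general (p1 p2 p3 A2 A3 : ℝ)
    (hp1 : p1 ∈ Set.Ioo (0:ℝ) 1) (hp2 : p2 ∈ Set.Ioo (0:ℝ) 1)
    (hp3 : p3 ∈ Set.Ioo (0:ℝ) 1) :
    let V : ℝ → ℝ → ℝ := fun x12 x13 =>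
      (p1 * (x12 * (p1 * (1 - p3) / (p1 + p3 - p1 * p3)) +
             x13 * (p1 * (1 - p2) / (p1 + p2 - p1 * p2)))
        + (1 - p1) * A2 + (1 - p1) * (1 - p2) * A3)
        / (1 - (1 - p1) * (1 - p2) * (1 - p3))
    (p2 > p3 → ∀ x12 x13 : ℝ, 0 ≤ x12 → 0 ≤ x13 → x12 + x13 = 1 → x12 ≠ 1 →
        V x12 x13 < V 1 0) ∧
    (p3 > p2 → ∀ x12 x13 : ℝ, 0 ≤ x12 → 0 ≤ x13 → x12 + x13 = 1 → x13 ≠ 1 →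
        V x12 x13 < V 0 1) := by
  obtain ⟨hp10, hp11⟩ := hp1
  obtain ⟨hp20, hp21⟩ := hp2
  obtain ⟨hp30, hp31⟩ := hp3
  have hD : 0 < 1 - (1 - p1) * (1 - p2) * (1 - p3) := by
    have : (1 - p1) * (1 - p2) * (1 - p3) < 1 :=
      mul_lt_one_of_nonneg_of_lt_one_left (by nlinarith) (by nlinarith) (by linarith)
    linarith
  intro V
  refine ⟨fun h x12 x13 _ hx13 hsum hne => ?_, fun h x12 x13 hx12 _ hsum hne => ?_⟩
  · have hx13 : 0 < x13 := hx13.lt_of_ne' fun h0 => hne (by linarith)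
    have hc := duelValueSecond_lt_duelValueSecond hp10 hp11.le hp30.le h
    unfold duelValueSecond at hc
    simp only [V, one_mul, zero_mul, add_zero]
    gcongr
    exact convex_comb_lt_left hc hx13 hsum
  · have hx12 : 0 < x12 := hx12.lt_of_ne' fun h0 => hne (by linarith)
    have hc := duelValueSecond_lt_duelValueSecond hp10 hp11.le hp20.le h
    unfold duelValueSecond at hc
    simp only [V, one_mul, zero_mul, zero_add]
    gcongr
    rw [add_comm]
    exact convex_comb_lt_left hc hx12 (by linarith)

/-- In the 3-uel with distinct marksmanships, P1's payoff `V_{1,1111}` as a function of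
his mixed strategy `(x12, x13)` (probabilities of shooting P2 and P3, with the other
players' contributions `A2, A3` not depending on P1's choice) is uniquely maximized at
`x12 = 1` if `p2 > p3` and at `x13 = 1` if `p3 > p2`: the unique best response is to
shoot the strongest opponent. -/
theorem truel_shoot_strongest_opponent (p1 p2 p3 A2 A3 : ℝ)
    (hp1 : p1 ∈ Set.Ioo (0:ℝ) 1) (hp2 : p2 ∈ Set.Ioo (0:ℝ) 1)
    (hp3 : p3 ∈ Set.Ioo (0:ℝ) 1)
    (h12 : p1 ≠ p2) (h23 : p2 ≠ p3) (h13 : p1 ≠ p3) :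
    let V : ℝ → ℝ → ℝ := fun x12 x13 =>
      (p1 * (x12 * (p1 * (1 - p3) / (p1 + p3 - p1 * p3)) +
             x13 * (p1 * (1 - p2) / (p1 + p2 - p1 * p2)))
        + (1 - p1) * A2 + (1 - p1) * (1 - p2) * A3)
        / (1 - (1 - p1) * (1 - p2) * (1 - p3))
    (p2 > p3 → ∀ x12 x13 : ℝ, 0 ≤ x12 → 0 ≤ x13 → x12 + x13 = 1 → x12 ≠ 1 →
        V x12 x13 < V 1 0) ∧
    (p3 > p2 → ∀ x12 x13 : ℝ, 0 ≤ x12 → 0 ≤ x13 → x12 + x13 = 1 → x13 ≠ 1 →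
        V x12 x13 < V 0 1) :=
  truel_shoot_strongest_opponent_general p1 p2 p3 A2 A3 hp1 hp2 hp3
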